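/- arXiv:2406.03632 — 2 statements merged into one kernel-verified Lean document; each statement's English description precedes it below -/
import Mathlib

section
/- Let G be a graph with an RDV representation. Then any vertex v that maximizes the depth y(t(v)) of the top node of its path is a simple vertex: its closed neighbourhood N[v] is a clique that can be ordered w_1,...,w_k with N[w_1] ⊆ N[w_2] ⊆ ... ⊆ N[w_k]. -/
namespace Paper

/-- Has vertex `v` already been matched by the edge list `M`? -/
def matchedB {n : ℕ} (M : List (Fin n × Fin n)) (v : Fin n) : Bool :=
  M.any fun e => e.1 = v || e.2 = v

/-- One step of the greedy matching algorithm: process vertex `i`; if it is unmatched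
and has an unmatched neighbour, match it to the unmatched neighbour of smallest index. -/
def greedyStep {n : ℕ} (G : SimpleGraph (Fin n)) [DecidableRel G.Adj]
    (M : List (Fin n × Fin n)) (i : Fin n) : List (Fin n × Fin n) :=
  if matchedB M i then M
  else
    if h : (Finset.univ.filter fun j => G.Adj i j ∧ matchedB M j = false).Nonempty then
      (i, (Finset.univ.filter fun j => G.Adj i j ∧ matchedB M j = false).min' h) :: M
    else M

/-- The greedy matching algorithm, processing the vertices `v_1, …, v_n` in order. -/
def greedy {n : ℕ} (G : SimpleGraph (Fin n)) [DecidableRel G.Adj] : List (Fin n × Fin n) :=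
  (List.finRange n).foldl (greedyStep G) []

/-- The partial matching produced by the greedy algorithm after processing the
first `k` vertices. -/
def greedyPrefix {n : ℕ} (G : SimpleGraph (Fin n)) [DecidableRel G.Adj] (k : ℕ) :
    List (Fin n × Fin n) :=
  ((List.finRange n).take k).foldl (greedyStep G) []

/-- One step of the delayed greedy algorithm: state is (matching, free set `F`);
when processing `j`, if `j` has a neighbour in `F`, match `j` to the smallest-index
such neighbour and remove it from `F`; otherwise add `j` to `F`. -/
def delayedStep {n : ℕ} (G : SimpleGraph (Fin n)) [DecidableRel G.Adj]
    (s : List (Fin n × Fin n) × Finset (Fin n)) (j : Fin n) :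
    List (Fin n × Fin n) × Finset (Fin n) :=
  if h : (s.2.filter fun i => G.Adj i j).Nonempty then
    (((s.2.filter fun i => G.Adj i j).min' h, j) :: s.1,
      s.2.erase ((s.2.filter fun i => G.Adj i j).min' h))
  else (s.1, insert j s.2)

/-- The delayed greedy matching algorithm. -/
def delayedGreedy {n : ℕ} (G : SimpleGraph (Fin n)) [DecidableRel G.Adj] :
    List (Fin n × Fin n) :=
  ((List.finRange n).foldl (delayedStep G) ([], ∅)).1

/-- `M` is a matching of `G`: its members are edges of `G` and are pairwise
vertex-disjoint. -/
def IsMatchingL {n : ℕ} (G : SimpleGraph (Fin n)) (M : List (Fin n × Fin n)) : Prop :=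
  (∀ e ∈ M, G.Adj e.1 e.2) ∧
    ∀ e ∈ M, ∀ f ∈ M, e ≠ f → e.1 ≠ f.1 ∧ e.1 ≠ f.2 ∧ e.2 ≠ f.1 ∧ e.2 ≠ f.2

/-- A finite rooted tree on node set `Fin N`, given by a parent function and a
depth function (distance to the root). -/
structure RootedTree (N : ℕ) where
  parent : Fin N → Fin N
  root : Fin N
  depth : Fin N → ℕ
  depth_root : depth root = 0
  parent_root : parent root = root
  depth_parent : ∀ i, i ≠ root → depth (parent i) + 1 = depth i

/-- `T.Anc u w` : node `u` is an ancestor (possibly equal) of node `w`. -/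
def RootedTree.Anc {N : ℕ} (T : RootedTree N) (u w : Fin N) : Prop :=
  ∃ k : ℕ, T.parent^[k] w = u

/-- A node is a leaf if it has no children. -/
def RootedTree.IsLeaf {N : ℕ} (T : RootedTree N) (u : Fin N) : Prop :=
  ∀ w, T.parent w = u → w = u

/-- The data of an RDV representation: a rooted host tree `T` and, for each vertex `v`,
a downward path `P(v)` going from its top node `t v` down to its bottom node `b v`. -/
structure RDVData (N n : ℕ) where
  T : RootedTree N
  t : Fin n → Fin N
  b : Fin n → Fin N
  downward : ∀ v, T.Anc (t v) (b v)

/-- The node `u` lies on the downward path `P(v)`. -/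
def RDVData.onPath {N n : ℕ} (R : RDVData N n) (v : Fin n) (u : Fin N) : Prop :=
  R.T.Anc (R.t v) u ∧ R.T.Anc u (R.b v)

/-- `R` is an RDV representation of `G`: distinct vertices are adjacent iff their
downward paths share a node. -/
def RDVData.IsRep {N n : ℕ} (R : RDVData N n) (G : SimpleGraph (Fin n)) : Prop :=
  ∀ u w : Fin n, u ≠ w → (G.Adj u w ↔ ∃ node, R.onPath u node ∧ R.onPath w node)

/-- The identity enumeration `v_1, …, v_n` (i.e. the order on `Fin n`) is a bottom-up
enumeration: vertices are sorted by decreasing depth of the top node `t v`. -/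
def RDVData.BottomUp {N n : ℕ} (R : RDVData N n) : Prop :=
  ∀ i j : Fin n, i ≤ j → R.T.depth (R.t j) ≤ R.T.depth (R.t i)

/-- A planar (left-to-right) coordinate structure on a rooted tree: an injective
index on the leaves so that the leaf descendants of every node occupy a contiguous
range of indices, together with the leftmost leaf descendant `lmost` and rightmost
leaf descendant `rmost` of every node. -/
structure PlanarCoords {N : ℕ} (T : RootedTree N) where
  idx : Fin N → ℕ
  lmost : Fin N → Fin N
  rmost : Fin N → Fin N
  idx_inj : ∀ u w, T.IsLeaf u → T.IsLeaf w → idx u = idx w → u = w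
  lmost_leaf : ∀ u, T.IsLeaf (lmost u)
  lmost_desc : ∀ u, T.Anc u (lmost u)
  lmost_min : ∀ u lf, T.IsLeaf lf → T.Anc u lf → idx (lmost u) ≤ idx lf
  rmost_leaf : ∀ u, T.IsLeaf (rmost u)
  rmost_desc : ∀ u, T.Anc u (rmost u)
  rmost_max : ∀ u lf, T.IsLeaf lf → T.Anc u lf → idx lf ≤ idx (rmost u)
  contiguous : ∀ u lf lf' lf'', T.IsLeaf lf → T.IsLeaf lf' → T.IsLeaf lf'' →
    T.Anc u lf → T.Anc u lf' → idx lf ≤ idx lf'' → idx lf'' ≤ idx lf' → T.Anc u lf''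

/-- The x-coordinate of a node: the index of its leftmost leaf descendant. -/
def PlanarCoords.x {N : ℕ} {T : RootedTree N} (P : PlanarCoords T) (u : Fin N) : ℕ :=
  P.idx (P.lmost u)

/-- The closed neighbourhood `N[v]`. -/
def closedNbr {n : ℕ} (G : SimpleGraph (Fin n)) (v : Fin n) : Set (Fin n) :=
  insert v {w | G.Adj v w}

/-- `v` is a simple vertex: `N[v]` is a clique that can be ordered
`w_1, …, w_k` with `N[w_1] ⊆ N[w_2] ⊆ … ⊆ N[w_k]`. -/
def IsSimpleVx {n : ℕ} (G : SimpleGraph (Fin n)) (v : Fin n) : Prop :=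
  G.IsClique (closedNbr G v) ∧
    ∃ l : List (Fin n), (∀ w, w ∈ l ↔ w ∈ closedNbr G v) ∧
      l.Chain' fun a b => closedNbr G a ⊆ closedNbr G b

/-- The subgraph of `G` induced by the tail vertices `{v_i, …, v_n}`. -/
def tailGraph {n : ℕ} (G : SimpleGraph (Fin n)) (i : Fin n) : SimpleGraph (Fin n) where
  Adj a b := G.Adj a b ∧ i ≤ a ∧ i ≤ b
  symm := by constructor; intro a b h; exact ⟨h.1.symm, h.2.2, h.2.1⟩
  loopless := by constructor; intro a h; exact G.loopless.irrefl a h.1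

/-- `G` is chordal: every cycle of length at least 4 has a chord, i.e. an edge
between two (necessarily non-consecutive) vertices of the cycle that is not an
edge of the cycle. -/
def Chordal {V : Type*} (G : SimpleGraph V) : Prop :=
  ∀ (v : V) (c : G.Walk v v), c.IsCycle → 4 ≤ c.length →
    ∃ u w, u ∈ c.support ∧ w ∈ c.support ∧ G.Adj u w ∧ s(u, w) ∉ c.edges

/-- `S` is (the node set of) a subtree of the rooted tree `T`. -/
def IsSubtree {N : ℕ} (T : RootedTree N) (S : Set (Fin N)) : Prop :=
  S.Nonempty ∧ ∃ top ∈ S, (∀ u ∈ S, T.Anc top u) ∧ ∀ u ∈ S, u ≠ top → T.parent u ∈ S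

/-!
Since `t v` is at least as deep as every top node, a path meeting `P(v)` has its top above
`t v` and a node below it, so it passes through `t v`. Hence `N[v]` is the set of paths
through the node `t v`, a clique. Ordering it by decreasing depth of the tops makes the
closed neighbourhoods increase: if `x` meets `P(w)` below `t v`, then `P(x)` passes through
`t v` as well; if it meets `P(w)` above `t v`, it meets every path through `t v` whose top
is higher than that of `w`.
-/

theorem Set.Finite.exists_list_isChain_of_key {α β : Type*} [LinearOrder β] {s : Set α}
    (hs : s.Finite) (f : α → β) {r : α → α → Prop}
    (hr : ∀ a ∈ s, ∀ b ∈ s, f a ≤ f b → r a b) :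
    ∃ l : List α, (∀ x, x ∈ l ↔ x ∈ s) ∧ l.IsChain r := by
  classical
  let le : α → α → Prop := fun a b => f a ≤ f b
  have : Std.Total le := ⟨fun a b => le_total (f a) (f b)⟩
  have : IsTrans α le := ⟨fun _ _ _ => le_trans⟩
  let l := hs.toFinset.toList.insertionSort le
  have hmem : ∀ x, x ∈ l ↔ x ∈ s := fun x => by
    rw [(List.perm_insertionSort le _).mem_iff, Finset.mem_toList, Set.Finite.mem_toFinset]
  refine ⟨l, hmem, List.Pairwise.isChain ?_⟩
  exact (List.pairwise_insertionSort le _).imp_of_mem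
    fun ha hb hab => hr _ ((hmem _).mp ha) _ ((hmem _).mp hb) hab

namespace RootedTree

variable {N : ℕ} (T : RootedTree N)

theorem anc_refl (u : Fin N) : T.Anc u u := ⟨0, rfl⟩

theorem anc_trans {a b c : Fin N} (hab : T.Anc a b) (hbc : T.Anc b c) : T.Anc a c := by
  obtain ⟨k, rfl⟩ := hab
  obtain ⟨j, rfl⟩ := hbc
  exact ⟨k + j, Function.iterate_add_apply _ _ _ _⟩

theorem depth_parent_le (u : Fin N) : T.depth (T.parent u) ≤ T.depth u := by
  by_cases hu : u = T.root
  · rw [hu, T.parent_root]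
  · exact (T.depth_parent u hu).le.trans' (Nat.le_succ _)

theorem depth_iterate_parent_le (k : ℕ) (u : Fin N) :
    T.depth (T.parent^[k] u) ≤ T.depth u := by
  induction k generalizing u with
  | zero => rfl
  | succ k ih => exact (ih (T.parent u)).trans (T.depth_parent_le u)

theorem depth_le_of_anc {a b : Fin N} (h : T.Anc a b) : T.depth a ≤ T.depth b := by
  obtain ⟨k, rfl⟩ := h
  exact T.depth_iterate_parent_le k b

theorem eq_of_anc_of_depth_le {a b : Fin N} (h : T.Anc a b) (hd : T.depth b ≤ T.depth a) :
    a = b := by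
  obtain ⟨k, hk⟩ := h
  induction k generalizing b with
  | zero => exact hk.symm
  | succ k ih =>
    rw [Function.iterate_succ_apply] at hk
    by_cases hb : b = T.root
    · rw [hb, T.parent_root] at hk
      exact hb ▸ ih (hb ▸ hd) hk
    · have hab : T.depth a ≤ T.depth (T.parent b) := hk ▸ T.depth_iterate_parent_le k _
      have := T.depth_parent b hb
      omega

theorem anc_total_of_anc {a b c : Fin N} (hac : T.Anc a c) (hbc : T.Anc b c) :
    T.Anc a b ∨ T.Anc b a := by
  obtain ⟨k, hk⟩ := hac
  obtain ⟨j, hj⟩ := hbc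
  rcases le_total j k with h | h
  · exact .inl ⟨k - j, by rw [← hj, ← Function.iterate_add_apply, Nat.sub_add_cancel h, hk]⟩
  · exact .inr ⟨j - k, by rw [← hk, ← Function.iterate_add_apply, Nat.sub_add_cancel h, hj]⟩

theorem anc_of_anc_of_depth_le {a b c : Fin N} (hac : T.Anc a c) (hbc : T.Anc b c)
    (hd : T.depth a ≤ T.depth b) : T.Anc a b := by
  refine (T.anc_total_of_anc hac hbc).elim id fun hba => ?_
  rw [← T.eq_of_anc_of_depth_le hba hd]
  exact T.anc_refl b

end RootedTree

namespace RDVData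

variable {N n : ℕ} (R : RDVData N n)

theorem onPath_top (w : Fin n) : R.onPath w (R.t w) := ⟨R.T.anc_refl _, R.downward w⟩

theorem onPath_of_anc {w : Fin n} {a u : Fin N} (hu : R.onPath w u) (hau : R.T.Anc a u)
    (hd : R.T.depth (R.t w) ≤ R.T.depth a) : R.onPath w a :=
  ⟨R.T.anc_of_anc_of_depth_le hu.1 hau hd, R.T.anc_trans hau hu.2⟩

variable {R} {G : SimpleGraph (Fin n)}

theorem IsRep.mem_closedNbr_iff (hrep : R.IsRep G) {w x : Fin n} :
    x ∈ closedNbr G w ↔ ∃ u, R.onPath w u ∧ R.onPath x u := by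
  by_cases hxw : x = w
  · subst hxw
    exact ⟨fun _ => ⟨_, R.onPath_top x, R.onPath_top x⟩, fun _ => Set.mem_insert x _⟩
  · rw [closedNbr, Set.mem_insert_iff, or_iff_right hxw, Set.mem_ofPred_eq]
    exact hrep w x (Ne.symm hxw)

section Deepest

variable (hrep : R.IsRep G) {v : Fin n} (hmax : ∀ w, R.T.depth (R.t w) ≤ R.T.depth (R.t v))
include hrep hmax

theorem IsRep.mem_closedNbr_iff_onPath_top {x : Fin n} :
    x ∈ closedNbr G v ↔ R.onPath x (R.t v) := by
  rw [hrep.mem_closedNbr_iff]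
  refine ⟨fun ⟨u, hvu, hxu⟩ => R.onPath_of_anc hxu hvu.1 (hmax x),
    fun hx => ⟨_, R.onPath_top v, hx⟩⟩

theorem IsRep.isClique_closedNbr : G.IsClique (closedNbr G v) := fun a ha b hb hab =>
  (hrep a b hab).mpr ⟨R.t v, (hrep.mem_closedNbr_iff_onPath_top hmax).mp ha,
    (hrep.mem_closedNbr_iff_onPath_top hmax).mp hb⟩

theorem IsRep.closedNbr_subset_of_depth_le {w w' : Fin n} (hw : w ∈ closedNbr G v)
    (hw' : w' ∈ closedNbr G v) (hd : R.T.depth (R.t w') ≤ R.T.depth (R.t w)) :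
    closedNbr G w ⊆ closedNbr G w' := by
  rw [hrep.mem_closedNbr_iff_onPath_top hmax] at hw hw'
  intro x hx
  obtain ⟨u, hwu, hxu⟩ := hrep.mem_closedNbr_iff.mp hx
  rw [hrep.mem_closedNbr_iff]
  rcases R.T.anc_total_of_anc hwu.2 hw.2 with hu | hu
  · exact ⟨u, R.onPath_of_anc hw' hu (hd.trans (R.T.depth_le_of_anc hwu.1)), hxu⟩
  · exact ⟨R.t v, hw', R.onPath_of_anc hxu hu (hmax x)⟩

end Deepest

end RDVData

/-- In an RDV representation, any vertex maximizing the depth `y(t(v))`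
is a simple vertex. -/
theorem stmt6 {N n : ℕ} (G : SimpleGraph (Fin n)) (R : RDVData N n)
    (hrep : R.IsRep G) (v : Fin n)
    (hmax : ∀ w, R.T.depth (R.t w) ≤ R.T.depth (R.t v)) :
    IsSimpleVx G v := by
  refine ⟨hrep.isClique_closedNbr hmax, ?_⟩
  obtain ⟨l, hl, hchain⟩ := Set.Finite.exists_list_isChain_of_key (Set.toFinite _)
    (fun w => OrderDual.toDual (R.T.depth (R.t w)))
    fun a ha b hb hab => hrep.closedNbr_subset_of_depth_le hmax ha hb hab
  exact ⟨l, hl, hchain⟩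
end Paper
end

section
/- A graph has a representation as a vertex-intersection graph of subtrees of a tree (a clique-tree) if and only if it is chordal. -/
namespace SimpleGraph.Walk

variable {V : Type*} {G : SimpleGraph V} {u v x : V}

theorem IsCycle.snd_penultimate_notMem_edges {c : G.Walk x x} (hc : c.IsCycle)
    (hlen : 4 ≤ c.length) : s(c.snd, c.penultimate) ∉ c.edges := by
  intro hmem
  have hpen : c.penultimate ∈ c.toSubgraph.neighborSet (c.getVert 1) :=
    adj_toSubgraph_iff_mem_edges.mpr hmem
  rw [hc.neighborSet_toSubgraph_internal one_ne_zero (by omega)] at hpen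
  rcases hpen with h | h
  · exact (c.adj_penultimate hc.not_nil).ne (by simpa using h)
  · have := hc.getVert_injOn (by simp; omega) (by simp; omega) h
    omega

theorem isChordless_of_length_eq_dist {p : G.Walk u v}
    (hp : p.length = G.dist u v) : p.IsChordless := by
  rw [isChordless_iff_forall_mem_edges]
  suffices h : ∀ i j, i < j → j ≤ p.length → G.Adj (p.getVert i) (p.getVert j) →
      s(p.getVert i, p.getVert j) ∈ p.edges by
    intro a b ha hb hab
    obtain ⟨i, rfl, hi⟩ := mem_support_iff_exists_getVert.mp ha
    obtain ⟨j, rfl, hj⟩ := mem_support_iff_exists_getVert.mp hb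
    rcases lt_trichotomy i j with hij | rfl | hij
    · exact h i j hij hj hab
    · exact absurd hab (G.loopless.irrefl _)
    · rw [Sym2.eq_swap]
      exact h j i hij hi hab.symm
  intro i j hij hj hadj
  have hshortcut := G.dist_le ((p.take i).append (.cons hadj (p.drop j)))
  rw [length_append, length_cons, take_length, drop_length] at hshortcut
  obtain rfl : j = i + 1 := by omega
  exact p.mk_mem_edges_iff_exists.mpr ⟨i, by omega, rfl⟩

theorem IsChordless.map {W : Type*} {H : SimpleGraph W} (f : G ↪g H)
    {p : G.Walk u v} (hp : p.IsChordless) : (p.map f.toHom).IsChordless := by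
  rw [isChordless_iff_forall_mem_edges] at hp ⊢
  intro a b ha hb hab
  rw [support_map, List.mem_map] at ha hb
  obtain ⟨a, ha, rfl⟩ := ha
  obtain ⟨b, hb, rfl⟩ := hb
  rw [edges_map]
  exact List.mem_map_of_mem (f := Sym2.map f.toHom) (hp ha hb (f.map_adj_iff.mp hab))

end SimpleGraph.Walk

namespace Paper

open SimpleGraph

namespace RootedTree

variable {N : ℕ} (T : RootedTree N)

theorem depth_iterate_parent (x : Fin N) (k : ℕ) :
    T.depth (T.parent^[k] x) = T.depth x - k := by
  induction k with
  | zero => simp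
  | succ k ih =>
    rw [Function.iterate_succ_apply']
    by_cases h : T.parent^[k] x = T.root
    · rw [h, T.parent_root, T.depth_root]
      rw [h, T.depth_root] at ih
      omega
    · have := T.depth_parent _ h
      omega

theorem eq_root_of_depth_eq_zero {x : Fin N} (h : T.depth x = 0) : x = T.root := by
  by_contra hx
  have := T.depth_parent x hx
  omega

variable {T}

theorem Anc.eq_of_depth_le {x y : Fin N} (h : T.Anc y x) (hd : T.depth x ≤ T.depth y) :
    x = y := by
  obtain ⟨k, rfl⟩ := h
  rcases Nat.eq_zero_or_pos k with rfl | hk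
  · rfl
  · have hx : x = T.root := T.eq_root_of_depth_eq_zero (by
      have := T.depth_iterate_parent x k
      omega)
    subst hx
    rw [Function.iterate_fixed T.parent_root]

def IsTop (T : RootedTree N) (S : Set (Fin N)) (t : Fin N) : Prop :=
  t ∈ S ∧ (∀ u ∈ S, T.Anc t u) ∧ ∀ u ∈ S, u ≠ t → T.parent u ∈ S

theorem isSubtree_iff_exists_isTop {S : Set (Fin N)} :
    IsSubtree T S ↔ ∃ t, T.IsTop S t :=
  ⟨fun ⟨_, t, ht⟩ => ⟨t, ht⟩, fun ⟨t, ht⟩ => ⟨⟨t, ht.1⟩, t, ht⟩⟩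

theorem IsTop.mem_of_anc {S : Set (Fin N)} {t x y : Fin N} (h : T.IsTop S t) (hx : x ∈ S)
    (hyx : T.Anc y x) (hd : T.depth t ≤ T.depth y) : y ∈ S := by
  obtain ⟨k, rfl⟩ := hyx
  have climb : ∀ j, T.parent^[j] x ∈ S ∨ ∃ i ≤ j, T.parent^[i] x = t := by
    intro j
    induction j with
    | zero => exact Or.inl hx
    | succ j ih =>
      rcases ih with hj | ⟨i, hi, hit⟩
      · by_cases hjt : T.parent^[j] x = t
        · exact Or.inr ⟨j, j.le_succ, hjt⟩
        · rw [Function.iterate_succ_apply']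
          exact Or.inl (h.2.2 _ hj hjt)
      · exact Or.inr ⟨i, by omega, hit⟩
  rcases climb k with hk | ⟨i, hi, hit⟩
  · exact hk
  · have hanc : T.Anc (T.parent^[k] x) t :=
      ⟨k - i, by rw [← hit, ← Function.iterate_add_apply, Nat.sub_add_cancel hi]⟩
    rw [← hanc.eq_of_depth_le hd]
    exact h.1

theorem IsTop.mem_of_inter_nonempty {S S' : Set (Fin N)} {t t' : Fin N} (h : T.IsTop S t)
    (h' : T.IsTop S' t') (hSS' : (S ∩ S').Nonempty) (hd : T.depth t ≤ T.depth t') : t' ∈ S :=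
  let ⟨_, hxS, hxS'⟩ := hSS'
  h.mem_of_anc hxS (h'.2.1 _ hxS') hd

theorem isTop_singleton (x : Fin N) : T.IsTop {x} x :=
  ⟨rfl, fun _ hu => hu ▸ ⟨0, rfl⟩, fun _ hu hne => absurd hu hne⟩

end RootedTree

theorem exists_mem_forall_of_pairwise_inter {ι : Type*} {N : ℕ} {T : RootedTree N}
    {S : ι → Set (Fin N)} {K : Set ι} (hK : K.Finite) (hS : ∀ a ∈ K, IsSubtree T (S a))
    (hpair : K.Pairwise fun a b => (S a ∩ S b).Nonempty) : ∃ c, ∀ a ∈ K, c ∈ S a := by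
  rcases K.eq_empty_or_nonempty with rfl | hne
  · exact ⟨T.root, by simp⟩
  have : Nonempty (Fin N) := ⟨T.root⟩
  choose! top htop using fun a ha => RootedTree.isSubtree_iff_exists_isTop.mp (hS a ha)
  obtain ⟨a₀, ha₀, hmax⟩ := Set.exists_max_image K (fun a => T.depth (top a)) hK hne
  refine ⟨top a₀, fun a ha => ?_⟩
  by_cases haa₀ : a = a₀
  · exact haa₀ ▸ (htop a ha).1
  · exact (htop a ha).mem_of_inter_nonempty (htop a₀ ha₀) (hpair ha ha₀ haa₀) (hmax a ha)

namespace RootedTree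

variable {N : ℕ} {T : RootedTree N}

variable (T) in
def addLeaf (c : Fin N) : RootedTree (N + 1) where
  parent := Fin.lastCases c.castSucc fun u => (T.parent u).castSucc
  root := T.root.castSucc
  depth := Fin.lastCases (T.depth c + 1) T.depth
  depth_root := by simp [T.depth_root]
  parent_root := by simp [T.parent_root]
  depth_parent i hi := by
    induction i using Fin.lastCases with
    | last => simp
    | cast j => simpa using T.depth_parent j (by simpa using hi)

@[simp]
theorem addLeaf_parent_castSucc (c u : Fin N) :
    (T.addLeaf c).parent u.castSucc = (T.parent u).castSucc := by
  simp [addLeaf]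

@[simp]
theorem addLeaf_parent_last (c : Fin N) : (T.addLeaf c).parent (Fin.last N) = c.castSucc := by
  simp [addLeaf]

theorem addLeaf_iterate_parent_castSucc (c u : Fin N) (k : ℕ) :
    (T.addLeaf c).parent^[k] u.castSucc = (T.parent^[k] u).castSucc := by
  induction k generalizing u with
  | zero => rfl
  | succ k ih => rw [Function.iterate_succ_apply, addLeaf_parent_castSucc, ih,
      ← Function.iterate_succ_apply]

theorem Anc.addLeaf_castSucc {c u w : Fin N} (h : T.Anc u w) :
    (T.addLeaf c).Anc u.castSucc w.castSucc :=
  let ⟨k, hk⟩ := h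
  ⟨k, by rw [addLeaf_iterate_parent_castSucc, hk]⟩

theorem Anc.addLeaf_last {c u : Fin N} (h : T.Anc u c) :
    (T.addLeaf c).Anc u.castSucc (Fin.last N) :=
  let ⟨k, hk⟩ := h.addLeaf_castSucc (c := c)
  ⟨k + 1, by rw [Function.iterate_succ_apply, addLeaf_parent_last, hk]⟩

theorem IsTop.image_castSucc {S : Set (Fin N)} {t : Fin N} (h : T.IsTop S t) (c : Fin N) :
    (T.addLeaf c).IsTop (Fin.castSucc '' S) t.castSucc := by
  refine ⟨⟨t, h.1, rfl⟩, ?_, ?_⟩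
  · rintro _ ⟨u, hu, rfl⟩
    exact (h.2.1 u hu).addLeaf_castSucc
  · rintro _ ⟨u, hu, rfl⟩ hne
    rw [addLeaf_parent_castSucc]
    exact ⟨_, h.2.2 u hu (fun hut => hne (hut ▸ rfl)), rfl⟩

theorem IsTop.insert_last {S : Set (Fin N)} {t c : Fin N} (h : T.IsTop S t) (hc : c ∈ S) :
    (T.addLeaf c).IsTop (insert (Fin.last N) (Fin.castSucc '' S)) t.castSucc := by
  have hS := h.image_castSucc c
  refine ⟨Or.inr hS.1, ?_, ?_⟩
  · rintro _ (rfl | hu)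
    exacts [(h.2.1 c hc).addLeaf_last, hS.2.1 _ hu]
  · rintro _ (rfl | hu) hne
    · rw [addLeaf_parent_last]
      exact Or.inr ⟨c, hc, rfl⟩
    · exact Or.inr (hS.2.2 _ hu hne)

end RootedTree

theorem inter_nonempty_iff_last_or_castSucc {N : ℕ} {A B : Set (Fin (N + 1))} :
    (A ∩ B).Nonempty ↔
      (Fin.last N ∈ A ∧ Fin.last N ∈ B) ∨ ∃ y : Fin N, y.castSucc ∈ A ∧ y.castSucc ∈ B := by
  constructor
  · rintro ⟨z, hzA, hzB⟩
    induction z using Fin.lastCases with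
    | last => exact Or.inl ⟨hzA, hzB⟩
    | cast y => exact Or.inr ⟨y, hzA, hzB⟩
  · rintro (⟨hA, hB⟩ | ⟨y, hA, hB⟩)
    exacts [⟨_, hA, hB⟩, ⟨_, hA, hB⟩]

def HasSubtreeRep {V : Type*} (G : SimpleGraph V) : Prop :=
  ∃ N : ℕ, ∃ T : RootedTree N, ∃ S : V → Set (Fin N),
    (∀ v, IsSubtree T (S v)) ∧ ∀ u w, u ≠ w → (G.Adj u w ↔ (S u ∩ S w).Nonempty)

def Simplicial {V : Type*} (G : SimpleGraph V) (v : V) : Prop :=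
  G.IsClique (G.neighborSet v)

section Representation

variable {V : Type*} {G : SimpleGraph V}

theorem hasSubtreeRep_of_isEmpty [IsEmpty V] : HasSubtreeRep G :=
  ⟨1, ⟨id, 0, fun _ => 0, rfl, rfl, fun i hi => absurd (Subsingleton.elim i 0) hi⟩,
    isEmptyElim, isEmptyElim, isEmptyElim⟩

theorem HasSubtreeRep.of_simplicial [Finite V] {v : V} (hv : Simplicial G v) {N : ℕ}
    (T : RootedTree N) (S : V → Set (Fin N)) (hS : ∀ u ≠ v, IsSubtree T (S u))
    (hrep : ∀ u w, u ≠ v → w ≠ v → u ≠ w → (G.Adj u w ↔ (S u ∩ S w).Nonempty)) :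
    HasSubtreeRep G := by
  classical
  obtain ⟨c, hc⟩ := exists_mem_forall_of_pairwise_inter (Set.toFinite (G.neighborSet v))
    (fun a ha => hS a (G.ne_of_adj ha).symm)
    (fun a ha b hb hab => (hrep a b (G.ne_of_adj ha).symm (G.ne_of_adj hb).symm hab).mp
      (hv ha hb hab))
  let S₂ : V → Set (Fin (N + 1)) := fun u =>
    if u = v then {Fin.last N}
    else if G.Adj v u then insert (Fin.last N) (Fin.castSucc '' S u) else Fin.castSucc '' S u
  have last_mem : ∀ u, Fin.last N ∈ S₂ u ↔ u = v ∨ G.Adj v u := by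
    intro u; simp only [S₂]; split_ifs <;> simp_all
  have castSucc_mem : ∀ u y, y.castSucc ∈ S₂ u ↔ u ≠ v ∧ y ∈ S u := by
    intro u y; simp only [S₂]; split_ifs <;> simp_all [Fin.castSucc_ne_last]
  refine ⟨N + 1, T.addLeaf c, S₂, fun u => ?_, fun u w huw => ?_⟩
  · rw [RootedTree.isSubtree_iff_exists_isTop]
    simp only [S₂]
    split_ifs with huv hvu
    · exact ⟨_, RootedTree.isTop_singleton _⟩
    · obtain ⟨t, ht⟩ := RootedTree.isSubtree_iff_exists_isTop.mp (hS u huv)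
      exact ⟨_, ht.insert_last (hc u hvu)⟩
    · obtain ⟨t, ht⟩ := RootedTree.isSubtree_iff_exists_isTop.mp (hS u huv)
      exact ⟨_, ht.image_castSucc c⟩
  · simp only [inter_nonempty_iff_last_or_castSucc, last_mem, castSucc_mem]
    by_cases huv : u = v
    · subst huv; simp [huw.symm]
    by_cases hwv : w = v
    · subst hwv; simp [huv, G.adj_comm]
    simp only [huv, hwv, false_or, ne_eq, not_false_eq_true, true_and]
    rw [← Set.inter_nonempty, ← hrep u w huv hwv huw]
    exact ⟨Or.inr, fun h => h.elim (fun h => hv h.1 h.2 huw) id⟩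

theorem HasSubtreeRep.of_induce_compl_simplicial [Finite V] {v : V} (hv : Simplicial G v)
    (h : HasSubtreeRep (G.induce {v}ᶜ)) : HasSubtreeRep G := by
  classical
  obtain ⟨N, T, S, hS, hrep⟩ := h
  refine .of_simplicial hv T (fun u => if hu : u = v then ∅ else S ⟨u, hu⟩)
    (fun u hu => by simpa [hu] using hS ⟨u, hu⟩) (fun u w hu hw huw => ?_)
  simpa [hu, hw] using hrep ⟨u, hu⟩ ⟨w, hw⟩ (fun h => huw (congrArg Subtype.val h))

end Representation

theorem HasSubtreeRep.chordal {V : Type*} {G : SimpleGraph V} (h : HasSubtreeRep G) :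
    Chordal G := by
  classical
  obtain ⟨N, T, S, hS, hrep⟩ := h
  choose top htop using fun v => RootedTree.isSubtree_iff_exists_isTop.mp (hS v)
  intro x c hc hlen
  obtain ⟨y, hy, hmax⟩ := Set.exists_max_image {u | u ∈ c.support} (fun u => T.depth (top u))
    c.support.finite_toSet ⟨x, c.start_mem_support⟩
  let c' := c.rotate y hy
  have hc' : c'.IsCycle := hc.rotate hy
  have mem_support : ∀ u ∈ c'.support, u ∈ c.support := fun u hu =>
    (c.mem_support_rotate_iff y hy).mp hu
  have top_mem : ∀ u ∈ c'.support, G.Adj y u → top y ∈ S u := fun u hu hadj =>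
    (htop u).mem_of_inter_nonempty (htop y) ((hrep u y hadj.ne.symm).mp hadj.symm)
      (hmax u (mem_support u hu))
  refine ⟨c'.snd, c'.penultimate, mem_support _ (c'.getVert_mem_support 1),
    mem_support _ (c'.getVert_mem_support _), (hrep _ _ hc'.snd_ne_penultimate).mpr
      ⟨top y, top_mem _ (c'.getVert_mem_support 1) (c'.adj_snd hc'.not_nil),
        top_mem _ (c'.getVert_mem_support _) (c'.adj_penultimate hc'.not_nil).symm⟩, ?_⟩
  rw [← (c.rotate_edges y hy).perm.mem_iff]
  exact hc'.snd_penultimate_notMem_edges (by rwa [Walk.length_rotate])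

section Chordal

variable {V : Type*} {G : SimpleGraph V}

theorem Chordal.of_embedding {W : Type*} {H : SimpleGraph W} (f : G ↪g H) (hH : Chordal H) :
    Chordal G := by
  intro v c hc hlen
  obtain ⟨a, b, ha, hb, hab, hnotMem⟩ := hH (f v) (c.map f.toHom) (hc.map f.injective)
    (by rwa [Walk.length_map])
  rw [Walk.support_map, List.mem_map] at ha hb
  obtain ⟨a, ha, rfl⟩ := ha
  obtain ⟨b, hb, rfl⟩ := hb
  refine ⟨a, b, ha, hb, f.map_adj_iff.mp hab, fun hmem => hnotMem ?_⟩
  rw [Walk.edges_map]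
  exact List.mem_map_of_mem (f := Sym2.map f.toHom) hmem

/-- Closing a chordless path through a common neighbour `v` of its ends gives a cycle whose only
possible chord is `s(x, y)`. -/
theorem Chordal.adj_of_isChordless (hG : Chordal G) {v x y : V} {P : G.Walk x y}
    (hP : P.IsPath) (hPc : P.IsChordless) (hvP : v ∉ P.support) (hvx : G.Adj v x)
    (hvy : G.Adj v y) (hxy : x ≠ y) (hv : ∀ z ∈ P.support, G.Adj v z → z = x ∨ z = y) :
    G.Adj x y := by
  by_contra hnxy
  have hlen : 2 ≤ P.length := by
    by_contra! h
    interval_cases hP1 : P.length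
    · exact hxy (Walk.eq_of_length_eq_zero hP1)
    · exact hnxy (Walk.exists_length_eq_one_iff.mp ⟨P, hP1⟩)
  let c : G.Walk v v := .cons hvx (P.concat hvy.symm)
  have hc : c.IsCycle := by
    refine (Walk.cons_isCycle_iff _ _).mpr ⟨(Walk.concat_isPath_iff _).mpr ⟨hP, hvP⟩, ?_⟩
    rw [Walk.edges_concat, List.concat_eq_append, List.mem_append, List.mem_singleton, not_or]
    refine ⟨fun h => hvP (P.fst_mem_support_of_mem_edges h), fun h => ?_⟩
    rcases Sym2.eq_iff.mp h with ⟨rfl, -⟩ | ⟨-, rfl⟩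
    exacts [hvy.ne rfl, hxy rfl]
  have hsupport : ∀ z ∈ c.support, z = v ∨ z ∈ P.support := by
    intro z hz
    simp only [c, Walk.support_cons, Walk.support_concat, List.mem_cons, List.mem_append] at hz
    tauto
  have hedge : ∀ z ∈ P.support, G.Adj v z → s(v, z) ∈ c.edges := by
    intro z hz hvz
    rcases hv z hz hvz with rfl | rfl
    · simp [c]
    · simp [c, Sym2.eq_swap]
  obtain ⟨a, b, ha, hb, hab, hnotMem⟩ := hG v c hc (by simp [c]; omega)
  rcases hsupport a ha with rfl | haP <;> rcases hsupport b hb with rfl | hbP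
  · exact G.loopless.irrefl _ hab
  · exact hnotMem (hedge b hbP hab)
  · exact hnotMem (Sym2.eq_swap ▸ hedge a haP hab.symm)
  · exact hnotMem (by simp [c, hPc.mem_edges haP hbP hab])

end Chordal

section ComponentAvoiding

variable {V : Type*} {G : SimpleGraph V} {v w : V}

theorem Simplicial.of_induce {U : Set V} {s : U} (hs : Simplicial (G.induce U) s)
    (hU : G.neighborSet s ⊆ U) : Simplicial G s := fun a ha b hb hab =>
  hs (show (G.induce U).Adj s ⟨a, hU ha⟩ from ha) (show (G.induce U).Adj s ⟨b, hU hb⟩ from hb)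
    (fun h => hab (congrArg Subtype.val h))

/-- The component of `w` in `G - N[v]`. -/
def componentAvoiding (G : SimpleGraph V) (v w : V) : Set V :=
  {z | ∃ p : G.Walk w z, ∀ y ∈ p.support, y ≠ v ∧ ¬G.Adj v y}

theorem ne_and_not_adj_of_mem_componentAvoiding {z : V} (hz : z ∈ componentAvoiding G v w) :
    z ≠ v ∧ ¬G.Adj v z :=
  let ⟨p, hp⟩ := hz
  hp z p.end_mem_support

theorem mem_componentAvoiding_or_adj {c z : V} (hc : c ∈ componentAvoiding G v w)
    (hcz : G.Adj c z) : z ∈ componentAvoiding G v w ∨ G.Adj v z := by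
  obtain ⟨p, hp⟩ := hc
  by_cases hz : z ≠ v ∧ ¬G.Adj v z
  · refine Or.inl ⟨p.concat hcz, fun y hy => ?_⟩
    rw [Walk.support_concat, List.mem_append, List.mem_singleton] at hy
    rcases hy with hy | rfl
    exacts [hp y hy, hz]
  · rw [not_and_or, not_not, not_not] at hz
    rcases hz with rfl | hvz
    · exact absurd hcz.symm (hp c p.end_mem_support).2
    · exact Or.inr hvz

theorem reachable_induce_componentAvoiding {c c' : V} (hc : c ∈ componentAvoiding G v w)
    (hc' : c' ∈ componentAvoiding G v w) :
    (G.induce (componentAvoiding G v w)).Reachable ⟨c, hc⟩ ⟨c', hc'⟩ := by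
  classical
  have hw : w ∈ componentAvoiding G v w :=
    let ⟨p, hp⟩ := hc
    ⟨.nil, fun y hy => (List.mem_singleton.mp hy) ▸ hp w p.start_mem_support⟩
  have from_start : ∀ z (hz : z ∈ componentAvoiding G v w),
      (G.induce (componentAvoiding G v w)).Reachable ⟨w, hw⟩ ⟨z, hz⟩ := by
    rintro z ⟨p, hp⟩
    exact ⟨p.induce (componentAvoiding G v w) fun y hy =>
      show y ∈ componentAvoiding G v w from
        ⟨p.takeUntil y hy, fun x hx => hp x (p.support_takeUntil_subset_support hy hx)⟩⟩
  exact (from_start c hc).symm.trans (from_start c' hc')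

theorem Chordal.isClique_neighbors_componentAvoiding (hG : Chordal G) :
    G.IsClique {z | G.Adj v z ∧ ∃ c ∈ componentAvoiding G v w, G.Adj c z} := by
  rintro x ⟨hvx, cx, hcx, hcxx⟩ y ⟨hvy, cy, hcy, hcyy⟩ hxy
  set C := componentAvoiding G v w
  set U : Set V := insert x (insert y C)
  have hxU : x ∈ U := .inl rfl
  have hyU : y ∈ U := .inr (.inl rfl)
  have hCU : C ⊆ U := fun z hz => .inr (.inr hz)
  have hreach : (G.induce U).Reachable ⟨x, hxU⟩ ⟨y, hyU⟩ :=
    ((show (G.induce U).Adj ⟨x, _⟩ ⟨cx, hCU hcx⟩ from hcxx.symm).reachable.trans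
      ((reachable_induce_componentAvoiding hcx hcy).map (G.induceHomOfLE hCU).toHom)).trans
      (show (G.induce U).Adj ⟨cy, hCU hcy⟩ ⟨y, _⟩ from hcyy).reachable
  obtain ⟨q, hq⟩ := hreach.exists_walk_length_eq_dist
  set P := q.map (Embedding.induce U).toHom with hP
  have hPU : ∀ z ∈ P.support, z ∈ U := by
    intro z hz
    rw [hP, Walk.support_map, List.mem_map] at hz
    obtain ⟨z, -, rfl⟩ := hz
    exact z.2
  refine hG.adj_of_isChordless (P := P)
    ((q.isPath_of_length_eq_dist hq).map Subtype.val_injective)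
    ((q.isChordless_of_length_eq_dist hq).map (Embedding.induce U)) (fun hv => ?_) hvx hvy hxy
    fun z hz hvz => ?_
  · rcases hPU v hv with h | h | h
    exacts [hvx.ne h, hvy.ne h, (ne_and_not_adj_of_mem_componentAvoiding h).1 rfl]
  · rcases hPU z hz with h | h | h
    exacts [.inl h, .inr h, absurd hvz (ne_and_not_adj_of_mem_componentAvoiding h).2]

end ComponentAvoiding

section Dirac

variable {V : Type*} {G : SimpleGraph V}

theorem Chordal.exists_simplicial_not_adj (hG : Chordal G) {v w : V} (hvw : v ≠ w)
    (hnadj : ¬G.Adj v w)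
    (ih : ∀ U : Set V, v ∉ U → ∀ K : Set U, (G.induce U).IsClique K → ∀ u ∉ K,
      ∃ s ∉ K, Simplicial (G.induce U) s) :
    ∃ s, Simplicial G s ∧ s ≠ v ∧ ¬G.Adj v s := by
  set C := componentAvoiding G v w
  set S := {z | G.Adj v z ∧ ∃ c ∈ C, G.Adj c z}
  have hS : G.IsClique S := hG.isClique_neighbors_componentAvoiding
  have hw : w ∈ C := ⟨.nil, fun y hy => (List.mem_singleton.mp hy) ▸ ⟨hvw.symm, hnadj⟩⟩
  have hvU : v ∉ C ∪ S := fun h => h.elim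
    (fun h => (ne_and_not_adj_of_mem_componentAvoiding h).1 rfl) (fun h => G.loopless.irrefl v h.1)
  obtain ⟨s, hsS, hs⟩ := ih (C ∪ S) hvU {z | ↑z ∈ S}
    (fun a ha b hb hab => show G.Adj a b from hS ha hb (Subtype.coe_ne_coe.mpr hab)) ⟨w, .inl hw⟩
    (fun h => hnadj h.1)
  have hsC : (s : V) ∈ C := s.2.resolve_right hsS
  refine ⟨s, hs.of_induce fun z hz => ?_, ne_and_not_adj_of_mem_componentAvoiding hsC⟩
  exact (mem_componentAvoiding_or_adj hsC hz).imp id fun hvz => ⟨hvz, s, hsC, hz⟩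

theorem exists_simplicial_notMem_of_isClique
    (h : ∀ v w, v ≠ w → ¬G.Adj v w → ∃ s, Simplicial G s ∧ s ≠ v ∧ ¬G.Adj v s) {K : Set V}
    (hK : G.IsClique K) {u : V} (hu : u ∉ K) : ∃ s ∉ K, Simplicial G s := by
  by_cases hcomplete : ∀ a b, a ≠ b → G.Adj a b
  · exact ⟨u, hu, fun a _ b _ hab => hcomplete a b hab⟩
  push Not at hcomplete
  obtain ⟨a, b, hab, hnab⟩ := hcomplete
  obtain ⟨s, hs, hsa, hnas⟩ := h a b hab hnab
  obtain ⟨t, ht, hts, hnst⟩ := h s a hsa (fun has => hnas has.symm)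
  by_cases hsK : s ∈ K
  · exact ⟨t, fun htK => hnst (hK hsK htK hts.symm), ht⟩
  · exact ⟨s, hsK, hs⟩

/-- Dirac's lemma, in a form strong enough to be proved by induction. -/
theorem Chordal.exists_simplicial_notMem [Finite V] (hG : Chordal G) {K : Set V}
    (hK : G.IsClique K) {u : V} (hu : u ∉ K) : ∃ s ∉ K, Simplicial G s := by
  induction h : Nat.card V using Nat.strong_induction_on generalizing V with
  | _ n ih =>
  refine exists_simplicial_notMem_of_isClique (fun v w hvw hnadj => ?_) hK hu
  refine hG.exists_simplicial_not_adj hvw hnadj fun U hvU K hK u hu => ?_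
  exact ih _ (h ▸ Finite.card_subtype_lt hvU) (hG.of_embedding (Embedding.induce U)) hK hu rfl

theorem Chordal.hasSubtreeRep [Finite V] (hG : Chordal G) : HasSubtreeRep G := by
  induction h : Nat.card V using Nat.strong_induction_on generalizing V with
  | _ n ih =>
  rcases isEmpty_or_nonempty V with hV | ⟨⟨v⟩⟩
  · exact hasSubtreeRep_of_isEmpty
  obtain ⟨s, -, hs⟩ := hG.exists_simplicial_notMem (Set.pairwise_empty _) (Set.notMem_empty v)
  have hcard : Nat.card ({s}ᶜ : Set V) < n := h ▸ Finite.card_subtype_lt fun hs => hs rfl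
  exact .of_induce_compl_simplicial hs (ih _ hcard (hG.of_embedding (Embedding.induce _)) rfl)

end Dirac

/-- A graph has a representation as a vertex-intersection graph of
subtrees of a tree iff it is chordal. -/
theorem stmt15 {n : ℕ} (G : SimpleGraph (Fin n)) :
    (∃ N : ℕ, ∃ T : RootedTree N, ∃ S : Fin n → Set (Fin N),
        (∀ v, IsSubtree T (S v)) ∧
          ∀ u w, u ≠ w → (G.Adj u w ↔ (S u ∩ S w).Nonempty)) ↔
      Chordal G :=
  ⟨HasSubtreeRep.chordal, Chordal.hasSubtreeRep⟩

end Paper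
end
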